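/- Let ℓ be strictly positive edge lengths on G, p the minimum ℓ-distance between distinct terminals, and P an ℓ-geodesic from terminal s to terminal t. If P contains no node at ℓ-distance exactly p/2 from the terminal set, then P decomposes as P1 ∘ (u, e, v) ∘ P2 where all nodes of P1 (including u) are at distance < p/2 from s, all nodes of P2 (including v) are at distance < p/2 from t, s ≠ t, and dist_ℓ(s,u) + ℓ(e) + dist_ℓ(v,t) = p. Moreover, along P1 the distances from s are strictly increasing and along P2 the distances to t are strictly decreasing. -/

import Mathlib

/-!
Every walk between distinct terminals has length at least `p`: shorten it to a path and cut it
at its first inner terminal. Hence, if `x` splits the geodesic `P` as `A ++ B` and `w` is a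
terminal nearest to `x`, going from `s` to `w` via `A` and from `w` to `t` via `B` shows
`2 p ≤ p + 2 π(x)` unless `w ∈ {s, t}`. As `π(x) ≤ min(ℓ(A), ℓ(B)) ≤ p/2` and `π(x) ≠ p/2`, `w` is
`s` or `t`, and then `A` (resp. `B`) is a shortest walk of length `π(x) < p/2`. Walking along `P`
from `s`, the first node whose prefix is no longer such a short geodesic gives the edge `(u, v)`.
-/

open SimpleGraph

/-- A `T`-path: its endpoints are distinct terminals and all internal nodes
are non-terminals. -/
def IsTPath {V : Type} (G : SimpleGraph V) (T : Set V) {s t : V}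
    (P : G.Walk s t) : Prop :=
  s ∈ T ∧ t ∈ T ∧ s ≠ t ∧ P.IsPath ∧
    ∀ v ∈ P.support, v ≠ s → v ≠ t → v ∉ T

/-- The `ℓ`-length of a walk: the sum of the lengths of its edges. -/
noncomputable def walkLen {V : Type} (ell : V → V → ℚ) {G : SimpleGraph V}
    {u v : V} (P : G.Walk u v) : ℚ :=
  (P.darts.map fun d => ell d.toProd.1 d.toProd.2).sum

/-- `d` is the shortest-path distance function of `G` with respect to the
edge lengths `ell`. -/
def IsDistFun {V : Type} (G : SimpleGraph V) (ell : V → V → ℚ)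
    (d : V → V → ℚ) : Prop :=
  ∀ u v : V, IsLeast {x : ℚ | ∃ P : G.Walk u v, walkLen ell P = x} (d u v)

namespace SimpleGraph.Walk

variable {V : Type} {G : SimpleGraph V}

theorem exists_append_cons_of_nil_of_not {u w : V} {L : ∀ x, G.Walk u x → Prop}
    (P : G.Walk u w) (h0 : L u nil) (h1 : ¬ L w P) :
    ∃ (x y : V) (h : G.Adj x y) (P1 : G.Walk u x) (P2 : G.Walk y w),
      P = P1.append (cons h P2) ∧ L x P1 ∧ ¬ L y (P1.concat h) := by
  suffices key : ∀ {y} (Q : G.Walk y w) (A : G.Walk u y), L y A → ¬ L w (A.append Q) →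
      ∃ (x y : V) (h : G.Adj x y) (P1 : G.Walk u x) (P2 : G.Walk y w),
        A.append Q = P1.append (cons h P2) ∧ L x P1 ∧ ¬ L y (P1.concat h) by
    simpa using key P nil h0 (by simpa using h1)
  clear h0 h1 P
  intro y Q
  induction Q with
  | nil => exact fun A hA hA' => absurd (by simpa using hA) hA'
  | @cons a b c h Q ih =>
    intro A hA hAQ
    by_cases hstep : L b (A.concat h)
    · rw [← concat_append] at hAQ ⊢
      exact ih _ hstep hAQ
    · exact ⟨a, b, h, A, Q, rfl, hA, hstep⟩

end SimpleGraph.Walk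

section walkLen

variable {V : Type} {G : SimpleGraph V} (ell : V → V → ℚ)

@[simp]
lemma walkLen_nil {u : V} : walkLen ell (Walk.nil : G.Walk u u) = 0 := rfl

@[simp]
lemma walkLen_cons {u v w : V} (h : G.Adj u v) (P : G.Walk v w) :
    walkLen ell (Walk.cons h P) = ell u v + walkLen ell P := by
  simp [walkLen]

lemma walkLen_append {u v w : V} (P : G.Walk u v) (Q : G.Walk v w) :
    walkLen ell (P.append Q) = walkLen ell P + walkLen ell Q := by
  simp [walkLen, Walk.darts_append]

lemma walkLen_reverse (hsym : ∀ u v, ell u v = ell v u) {u v : V} (P : G.Walk u v) :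
    walkLen ell P.reverse = walkLen ell P := by
  rw [walkLen, walkLen, Walk.darts_reverse, List.map_reverse, List.sum_reverse, List.map_map]
  exact congrArg List.sum (List.map_congr_left fun _ _ => hsym _ _)

variable {ell} (hpos : ∀ u v, G.Adj u v → 0 < ell u v)
include hpos

lemma walkLen_nonneg {u v : V} (P : G.Walk u v) : 0 ≤ walkLen ell P :=
  List.sum_nonneg <| by
    simp only [List.mem_map]
    rintro _ ⟨dd, -, rfl⟩
    exact (hpos _ _ dd.adj).le

lemma walkLen_pos {u v : V} (huv : u ≠ v) (P : G.Walk u v) : 0 < walkLen ell P := by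
  cases P with
  | nil => exact absurd rfl huv
  | cons h P => simpa using add_pos_of_pos_of_nonneg (hpos _ _ h) (walkLen_nonneg hpos P)

lemma walkLen_le_walkLen_append_left {u v w : V} (P : G.Walk u v) (Q : G.Walk v w) :
    walkLen ell P ≤ walkLen ell (P.append Q) := by
  simpa [walkLen_append] using walkLen_nonneg hpos Q

lemma walkLen_le_walkLen_append_right {u v w : V} (P : G.Walk u v) (Q : G.Walk v w) :
    walkLen ell Q ≤ walkLen ell (P.append Q) := by
  simpa [walkLen_append] using walkLen_nonneg hpos P

lemma walkLen_bypass_le [DecidableEq V] {u v : V} (P : G.Walk u v) :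
    walkLen ell P.bypass ≤ walkLen ell P :=
  (P.darts_bypass_sublist_darts.map _).sum_le_sum <| by
    simp only [List.mem_map]
    rintro _ ⟨dd, -, rfl⟩
    exact (hpos _ _ dd.adj).le

end walkLen

namespace IsDistFun

variable {V : Type} {G : SimpleGraph V} {ell : V → V → ℚ} {d : V → V → ℚ}
  (hd : IsDistFun G ell d)
include hd

lemma le_walkLen {u v : V} (W : G.Walk u v) : d u v ≤ walkLen ell W :=
  (hd u v).2 ⟨W, rfl⟩

lemma self_eq_zero (hpos : ∀ u v, G.Adj u v → 0 < ell u v) (u : V) : d u u = 0 := by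
  obtain ⟨W, hW⟩ := (hd u u).1
  exact le_antisymm (hd.le_walkLen Walk.nil) (hW ▸ walkLen_nonneg hpos W)

lemma symm (hsym : ∀ u v, ell u v = ell v u) (u v : V) : d u v = d v u := by
  have key : ∀ a b, d a b ≤ d b a := fun a b => by
    obtain ⟨W, hW⟩ := (hd b a).1
    exact hW ▸ walkLen_reverse ell hsym W ▸ hd.le_walkLen W.reverse
  exact le_antisymm (key u v) (key v u)

lemma le_add (u v w : V) : d u w ≤ d u v + d v w := by
  obtain ⟨A, hA⟩ := (hd u v).1
  obtain ⟨B, hB⟩ := (hd v w).1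
  simpa [walkLen_append, hA, hB] using hd.le_walkLen (A.append B)

lemma walkLen_eq_of_walkLen_append_eq {u v w : V} {A : G.Walk u v} {B : G.Walk v w}
    (hAB : walkLen ell (A.append B) = d u w) :
    walkLen ell A = d u v ∧ walkLen ell B = d v w := by
  have := hd.le_add u v w
  have := hd.le_walkLen A
  have := hd.le_walkLen B
  rw [walkLen_append] at hAB
  constructor <;> linarith

variable (hpos : ∀ u v, G.Adj u v → 0 < ell u v)
include hpos

lemma le_walkLen_of_mem_support_left {u v x : V} {W : G.Walk u v} (hx : x ∈ W.support) :
    d u x ≤ walkLen ell W := by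
  obtain ⟨A, B, rfl⟩ := Walk.mem_support_iff_exists_append.mp hx
  exact (hd.le_walkLen A).trans (walkLen_le_walkLen_append_left hpos A B)

lemma le_walkLen_of_mem_support_right {u v x : V} {W : G.Walk u v} (hx : x ∈ W.support) :
    d x v ≤ walkLen ell W := by
  obtain ⟨A, B, rfl⟩ := Walk.mem_support_iff_exists_append.mp hx
  exact (hd.le_walkLen B).trans (walkLen_le_walkLen_append_right hpos A B)

lemma chain'_dist_to_end {u v : V} {W : G.Walk u v} (hW : walkLen ell W = d u v) :
    W.support.IsChain fun x y => d y v < d x v := by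
  induction W with
  | nil => exact List.isChain_singleton _
  | @cons a b c h W ih =>
    have hsplit := hd.walkLen_eq_of_walkLen_append_eq (A := Walk.cons h Walk.nil) (B := W) hW
    have hdist : d b c < d a c := by
      rw [← hW, ← hsplit.2, walkLen_cons]
      linarith [hpos a b h]
    rw [Walk.support_cons, ← W.cons_tail_support, List.isChain_cons_cons, W.cons_tail_support]
    exact ⟨hdist, ih hsplit.2⟩

lemma chain'_dist_from_start (hsym : ∀ u v, ell u v = ell v u) {u v : V} {W : G.Walk u v}
    (hW : walkLen ell W = d u v) : W.support.IsChain fun x y => d u x < d u y := by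
  have hrev := hd.chain'_dist_to_end hpos (W := W.reverse)
    (by rw [walkLen_reverse ell hsym, hW, hd.symm hsym])
  rw [Walk.support_reverse, List.isChain_reverse] at hrev
  simpa only [hd.symm hsym u] using hrev

end IsDistFun

section Terminals

variable {V : Type} {G : SimpleGraph V} {T : Set V} {ell : V → V → ℚ} {p : ℚ}

theorem le_walkLen_of_isLeast_tPath (hpos : ∀ u v, G.Adj u v → 0 < ell u v)
    (hp : IsLeast {x : ℚ | ∃ (s t : V) (P : G.Walk s t), IsTPath G T P ∧ walkLen ell P = x} p)
    {a b : V} (W : G.Walk a b) (ha : a ∈ T) (hb : b ∈ T) (hab : a ≠ b) :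
    p ≤ walkLen ell W := by
  classical
  induction hn : W.length using Nat.strong_induction_on generalizing b W with
  | _ n ih =>
  refine le_trans ?_ (walkLen_bypass_le hpos W)
  by_cases hT : ∀ v ∈ W.bypass.support, v ≠ a → v ≠ b → v ∉ T
  · exact hp.2 ⟨a, b, W.bypass, ⟨ha, hb, hab, W.bypass_isPath, hT⟩, rfl⟩
  push Not at hT
  obtain ⟨v, hv, hva, hvb, hvT⟩ := hT
  have hlt : (W.bypass.takeUntil v hv).length < n :=
    hn ▸ (Walk.length_takeUntil_lt_length hv hvb).trans_le W.length_bypass_le_length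
  calc p ≤ walkLen ell (W.bypass.takeUntil v hv) := ih _ hlt _ hvT hva.symm rfl
    _ ≤ walkLen ell W.bypass := by
      conv_rhs => rw [← W.bypass.take_spec hv]
      exact walkLen_le_walkLen_append_left hpos _ _

theorem geodesic_split_dist_lt_half (hsym : ∀ u v, ell u v = ell v u)
    {d : V → V → ℚ} (hd : IsDistFun G ell d)
    (hmin : ∀ {a b : V} (W : G.Walk a b), a ∈ T → b ∈ T → a ≠ b → p ≤ walkLen ell W)
    {s t x : V} (hs : s ∈ T) (ht : t ∈ T) (hst : s ≠ t) (A : G.Walk s x) (B : G.Walk x t)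
    (hAB : walkLen ell A + walkLen ell B = p)
    {r : ℚ} (hr : IsLeast {y : ℚ | ∃ w ∈ T, d x w = y} r) (hrp : r ≠ p / 2) :
    (walkLen ell A = d s x ∧ d s x < p / 2) ∨ (walkLen ell B = d x t ∧ d x t < p / 2) := by
  obtain ⟨w, hw, hxw⟩ := hr.1
  obtain ⟨W, hW⟩ := (hd x w).1
  have hrA : r ≤ walkLen ell A := calc
    r ≤ d x s := hr.2 ⟨s, hs, rfl⟩
    _ ≤ walkLen ell A := hd.symm hsym s x ▸ hd.le_walkLen A
  have hrB : r ≤ walkLen ell B := (hr.2 ⟨t, ht, rfl⟩).trans (hd.le_walkLen B)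
  have hr_lt : r < p / 2 := lt_of_le_of_ne (by linarith) hrp
  have via_A : s ≠ w → p ≤ walkLen ell A + r := fun hsw => by
    simpa [walkLen_append, hW, hxw] using hmin (A.append W) hs hw hsw
  have via_B : w ≠ t → p ≤ r + walkLen ell B := fun hwt => by
    simpa [walkLen_append, walkLen_reverse ell hsym, hW, hxw] using
      hmin (W.reverse.append B) hw ht hwt
  have hsx := hd.le_walkLen A
  have hxt := hd.le_walkLen B
  rcases eq_or_ne w s with rfl | hws
  · have := via_B hst
    have := hd.symm hsym w x
    exact Or.inl ⟨by linarith, by linarith⟩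
  rcases eq_or_ne w t with rfl | hwt
  · have := via_A hst
    exact Or.inr ⟨by linarith, by linarith⟩
  · linarith [via_A hws.symm, via_B hwt]

end Terminals

theorem geodesic_without_central_node_decomposition_general
    {V : Type} (G : SimpleGraph V) (T : Set V)
    (ell : V → V → ℚ) (hpos : ∀ u v, G.Adj u v → 0 < ell u v)
    (hsym : ∀ u v, ell u v = ell v u)
    (d : V → V → ℚ) (hd : IsDistFun G ell d)
    (p : ℚ)
    (hp : IsLeast {x : ℚ | ∃ (s t : V) (P : G.Walk s t),
      IsTPath G T P ∧ walkLen ell P = x} p)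
    (pi : V → ℚ) (hpi : ∀ v, IsLeast {x : ℚ | ∃ t ∈ T, d v t = x} (pi v))
    {s t : V} (P : G.Walk s t) (hP : IsTPath G T P)
    (hgeo : walkLen ell P = p)
    (hnocentral : ∀ x ∈ P.support, pi x ≠ p/2) :
    s ≠ t ∧
    ∃ (u v : V) (h : G.Adj u v) (P1 : G.Walk s u) (P2 : G.Walk v t),
      P = P1.append (SimpleGraph.Walk.cons h P2) ∧
      (∀ x ∈ P1.support, d s x < p/2) ∧
      (∀ x ∈ P2.support, d x t < p/2) ∧
      d s u + ell u v + d v t = p ∧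
      P1.support.Chain' (fun x y => d s x < d s y) ∧
      P2.support.Chain' (fun x y => d y t < d x t) := by
  obtain ⟨hs, ht, hst, -, -⟩ := hP
  have hp_pos : 0 < p := hgeo ▸ walkLen_pos hpos hst P
  obtain ⟨u, v, h, P1, P2, rfl, ⟨hP1, hu⟩, hnot⟩ :=
    P.exists_append_cons_of_nil_of_not (L := fun x A => walkLen ell A = d s x ∧ d s x < p / 2)
      (by simp [hd.self_eq_zero hpos, hp_pos]) (by rw [hgeo]; rintro ⟨rfl, _⟩; linarith)
  obtain ⟨hP2, hv⟩ : walkLen ell P2 = d v t ∧ d v t < p / 2 :=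
    (geodesic_split_dist_lt_half hsym hd (le_walkLen_of_isLeast_tPath hpos hp) hs ht hst
      (P1.concat h) P2 (by rw [← walkLen_append, Walk.concat_append, hgeo]) (hpi v)
      (hnocentral v (by simp))).resolve_left hnot
  refine ⟨hst, u, v, h, P1, P2, rfl, fun x hx => ?_, fun x hx => ?_, ?_,
    hd.chain'_dist_from_start hpos hsym hP1, hd.chain'_dist_to_end hpos hP2⟩
  · exact (hd.le_walkLen_of_mem_support_left hpos hx).trans_lt (hP1 ▸ hu)
  · exact (hd.le_walkLen_of_mem_support_right hpos hx).trans_lt (hP2 ▸ hv)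
  · rw [← hP1, ← hP2, ← hgeo, walkLen_append, walkLen_cons, add_assoc]

/-- an `ℓ`-geodesic from `s` to `t` containing no central node
decomposes as `P1 ∘ (u,e,v) ∘ P2`, where `P1` lies in the zone of `s`, `P2`
lies in the zone of `t`, `dist(s,u) + ℓ(e) + dist(v,t) = p`, distances from `s`
strictly increase along `P1`, and distances to `t` strictly decrease along `P2`. -/
theorem geodesic_without_central_node_decomposition
    {V : Type} [Fintype V] (G : SimpleGraph V) (T : Set V)
    (ell : V → V → ℚ) (hpos : ∀ u v, G.Adj u v → 0 < ell u v)
    (hsym : ∀ u v, ell u v = ell v u)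
    (d : V → V → ℚ) (hd : IsDistFun G ell d)
    (p : ℚ)
    (hp : IsLeast {x : ℚ | ∃ (s t : V) (P : G.Walk s t),
      IsTPath G T P ∧ walkLen ell P = x} p)
    (pi : V → ℚ) (hpi : ∀ v, IsLeast {x : ℚ | ∃ t ∈ T, d v t = x} (pi v))
    {s t : V} (P : G.Walk s t) (hP : IsTPath G T P)
    (hgeo : walkLen ell P = p)
    (hnocentral : ∀ x ∈ P.support, pi x ≠ p/2) :
    s ≠ t ∧
    ∃ (u v : V) (h : G.Adj u v) (P1 : G.Walk s u) (P2 : G.Walk v t),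
      P = P1.append (SimpleGraph.Walk.cons h P2) ∧
      (∀ x ∈ P1.support, d s x < p/2) ∧
      (∀ x ∈ P2.support, d x t < p/2) ∧
      d s u + ell u v + d v t = p ∧
      P1.support.Chain' (fun x y => d s x < d s y) ∧
      P2.support.Chain' (fun x y => d y t < d x t) :=
  geodesic_without_central_node_decomposition_general G T ell hpos hsym d hd p hp pi hpi P hP hgeo
    hnocentral
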